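/- Let A(x) = Σ_{k=0}^n a_k x^k and B(x) = Σ_{k=0}^n b_k x^k with all coefficients positive and a_n/b_n ≤ a_{n−1}/b_{n−1} ≤ ⋯ ≤ a_0/b_0. Then every coefficient of A'(x)B(x) − B'(x)A(x) is nonpositive, so A'(x)B(x) − B'(x)A(x) ≤ 0 for x > 0. -/

import Mathlib

/-!
The coefficient of `x^m` in `A'B - B'A` is `∑_{i+j=m+1} i (a_i b_j - b_i a_j)`. The summand without
the factor `i` is antisymmetric in `(i, j)`, so symmetrising gives twice this coefficient as
`∑_{i+j=m+1} (i - j)(a_i b_j - a_j b_i)`, and every term is `≤ 0` because the ratios `a_k / b_k`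
decrease.
-/

open Polynomial Finset

theorem coeff_derivative_mul_sub {R : Type*} [CommRing R] (p q : R[X]) (m : ℕ) :
    (derivative p * q - derivative q * p).coeff m =
      ∑ x ∈ antidiagonal (m + 1),
        (x.1 : R) * (p.coeff x.1 * q.coeff x.2 - q.coeff x.1 * p.coeff x.2) := by
  rw [Nat.sum_antidiagonal_succ, coeff_sub, coeff_mul, coeff_mul, ← sum_sub_distrib]
  simp only [coeff_derivative, Nat.cast_zero, zero_mul, zero_add, Nat.cast_add, Nat.cast_one]
  exact sum_congr rfl fun x _ => by ring

theorem two_mul_sum_antidiagonal_fst_mul {R : Type*} [CommRing R] (f : ℕ × ℕ → R)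
    (hf : ∀ x, f x.swap = -f x) (N : ℕ) :
    2 * ∑ x ∈ antidiagonal N, (x.1 : R) * f x =
      ∑ x ∈ antidiagonal N, ((x.1 : R) - x.2) * f x := by
  have hswap : ∑ x ∈ antidiagonal N, (x.1 : R) * f x =
      -∑ x ∈ antidiagonal N, (x.2 : R) * f x := by
    rw [← Nat.sum_antidiagonal_swap, ← sum_neg_distrib]
    exact sum_congr rfl fun x _ => by rw [hf, Prod.fst_swap, mul_neg]
  rw [two_mul]
  nth_rewrite 2 [hswap]
  rw [← sub_eq_add_neg, ← sum_sub_distrib]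
  exact sum_congr rfl fun x _ => by ring

section OrderedRing

variable {R : Type*} [CommRing R] [LinearOrder R] [IsStrictOrderedRing R]

/-- `p.coeff k / q.coeff k` is antitone in `k`, with the denominators cleared. -/
def CoeffRatioAntitone (p q : R[X]) : Prop :=
  ∀ ⦃i j : ℕ⦄, j ≤ i → p.coeff i * q.coeff j ≤ p.coeff j * q.coeff i

theorem CoeffRatioAntitone.coeff_derivative_mul_sub_nonpos {p q : R[X]}
    (h : CoeffRatioAntitone p q) (m : ℕ) : (derivative p * q - derivative q * p).coeff m ≤ 0 := by
  set f : ℕ × ℕ → R := fun x => p.coeff x.1 * q.coeff x.2 - q.coeff x.1 * p.coeff x.2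
  have hf : ∀ x, f x.swap = -f x := fun x => by simp only [f, Prod.fst_swap, Prod.snd_swap]; ring
  have hterm : ∀ x : ℕ × ℕ, ((x.1 : R) - x.2) * f x ≤ 0 := by
    rintro ⟨i, j⟩
    rcases le_total j i with hji | hij
    · exact mul_nonpos_of_nonneg_of_nonpos (sub_nonneg.2 (by exact_mod_cast hji))
        (by linarith [h hji])
    · exact mul_nonpos_of_nonpos_of_nonneg (sub_nonpos.2 (by exact_mod_cast hij))
        (by linarith [h hij])
  have htwice : 2 * ∑ x ∈ antidiagonal (m + 1), (x.1 : R) * f x ≤ 0 := by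
    rw [two_mul_sum_antidiagonal_fst_mul f hf]
    exact sum_nonpos fun x _ => hterm x
  rw [coeff_derivative_mul_sub]
  linarith

theorem eval_nonpos_of_coeff_nonpos {p : R[X]} (hp : ∀ m, p.coeff m ≤ 0) {x : R} (hx : 0 ≤ x) :
    p.eval x ≤ 0 := by
  rw [eval_eq_sum_range]
  exact sum_nonpos fun i _ => mul_nonpos_of_nonpos_of_nonneg (hp i) (pow_nonneg hx i)

end OrderedRing

theorem coeff_sum_range_C_mul_X_pow {R : Type*} [Semiring R] (a : ℕ → R) (n i : ℕ) :
    (∑ k ∈ range (n + 1), C (a k) * X ^ k).coeff i = if i ≤ n then a i else 0 := by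
  simp

section OrderedField

variable {K : Type*} [Field K] [LinearOrder K] [IsStrictOrderedRing K]
  {n : ℕ} {a b : ℕ → K}

theorem cross_mul_le_of_adjacent (hb : ∀ k ≤ n, 0 < b k)
    (hchain : ∀ k, 1 ≤ k → k ≤ n → a k * b (k - 1) ≤ a (k - 1) * b k)
    {i j : ℕ} (hji : j ≤ i) (hi : i ≤ n) : a i * b j ≤ a j * b i := by
  have hanti : AntitoneOn (fun k => a k / b k) (Set.Iic n) :=
    antitoneOn_of_le_sub_one Set.ordConnected_Iic fun k hk0 hkn hk1 => by
      have hk : 1 ≤ k := Nat.one_le_iff_ne_zero.2 fun h => hk0 (h ▸ isMin_bot)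
      rw [div_le_div_iff₀ (hb k hkn) (hb _ hk1)]
      exact hchain k hk hkn
  have hratio := hanti (hji.trans hi : j ≤ n) hi hji
  rwa [div_le_div_iff₀ (hb i hi) (hb j (hji.trans hi))] at hratio

theorem coeffRatioAntitone_sum_range (hb : ∀ k ≤ n, 0 < b k)
    (hchain : ∀ k, 1 ≤ k → k ≤ n → a k * b (k - 1) ≤ a (k - 1) * b k) :
    CoeffRatioAntitone (∑ k ∈ range (n + 1), C (a k) * X ^ k)
      (∑ k ∈ range (n + 1), C (b k) * X ^ k) := by
  intro i j hji
  simp only [coeff_sum_range_C_mul_X_pow]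
  by_cases hi : i ≤ n
  · rw [if_pos hi, if_pos (hji.trans hi), if_pos hi, if_pos (hji.trans hi)]
    exact cross_mul_le_of_adjacent hb hchain hji hi
  · simp [hi]

end OrderedField

theorem stmt_9_general (n : ℕ) (a b : ℕ → ℝ)
    (hb : ∀ k ≤ n, 0 < b k)
    (hchain : ∀ k, 1 ≤ k → k ≤ n → a k * b (k - 1) ≤ a (k - 1) * b k)
    (A B : Polynomial ℝ)
    (hA : A = ∑ k ∈ Finset.range (n + 1), Polynomial.C (a k) * Polynomial.X ^ k)
    (hB : B = ∑ k ∈ Finset.range (n + 1), Polynomial.C (b k) * Polynomial.X ^ k) :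
    (∀ m, (Polynomial.derivative A * B - Polynomial.derivative B * A).coeff m ≤ 0) ∧
    (∀ x : ℝ, 0 < x →
      (Polynomial.derivative A * B - Polynomial.derivative B * A).eval x ≤ 0) := by
  subst hA hB
  have hcoeff := (coeffRatioAntitone_sum_range hb hchain).coeff_derivative_mul_sub_nonpos
  exact ⟨hcoeff, fun x hx => eval_nonpos_of_coeff_nonpos hcoeff hx.le⟩

theorem stmt_9 (n : ℕ) (a b : ℕ → ℝ)
    (ha : ∀ k ≤ n, 0 < a k) (hb : ∀ k ≤ n, 0 < b k)
    (hchain : ∀ k, 1 ≤ k → k ≤ n → a k * b (k - 1) ≤ a (k - 1) * b k)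
    (A B : Polynomial ℝ)
    (hA : A = ∑ k ∈ Finset.range (n + 1), Polynomial.C (a k) * Polynomial.X ^ k)
    (hB : B = ∑ k ∈ Finset.range (n + 1), Polynomial.C (b k) * Polynomial.X ^ k) :
    (∀ m, (Polynomial.derivative A * B - Polynomial.derivative B * A).coeff m ≤ 0) ∧
    (∀ x : ℝ, 0 < x →
      (Polynomial.derivative A * B - Polynomial.derivative B * A).eval x ≤ 0) :=
  stmt_9_general n a b hb hchain A B hA hB
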